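/- Let M = ℝ with δ(x, y) = |x − y|, let Γ be a uniform coincidence constraint containing the zero profile and closed under pointwise addition, let w : A → ℝ be nonnegative weights, τ ≥ 0, and let D : C → ℝ be a database. If D has a (δ≤τ)-repair, then there exists an optimal (δ≤τ)-repair E of D (one of minimum cost among all (δ≤τ)-repairs) whose values all lie in the finite set Vals(D) ∪ { v + w(a)·τ : v ∈ Vals(D), a ∈ A } ∪ { v − w(a)·τ : v ∈ Vals(D), a ∈ A }, where Vals(D) = { D(c) : c ∈ C }. -/

import Mathlib

/-!
Merging value classes of a repair adds their coincidence profiles, so a constraint closed under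
addition survives any map applied to the values of a repair. Within one value class the cost
`x ↦ ∑ w c * |D c - x|` is affine between consecutive points of the form `D c` or
`D c ± w (lab c) * τ`, and these points also bound the feasible values of the class; moving the
common value of the class to the cheaper neighbouring point keeps the repair feasible without
raising its cost. The optimum can therefore be taken over the finitely many repairs with values
among these points.
-/

open Finset

section Repair

variable {C A : Type*}

noncomputable def coincidenceProfile {M : Type*} (lab : C → A) (E : C → M) (v : M) : A → ℕ :=
  fun a => {c | lab c = a ∧ E c = v}.ncard

def SatisfiesCoincidence {M : Type*} (Γ : AddSubmonoid (A → ℕ)) (lab : C → A) (E : C → M) :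
    Prop :=
  ∀ v, coincidenceProfile lab E v ∈ Γ

/-- The `(δ≤τ)`-repairs are the case `ρ c = w (lab c) * τ`. -/
def IsRepairWithin (Γ : AddSubmonoid (A → ℕ)) (lab : C → A) (D ρ : C → ℝ) (E : C → ℝ) : Prop :=
  SatisfiesCoincidence Γ lab E ∧ ∀ c, |D c - E c| ≤ ρ c

def repairCost [Fintype C] (ω D E : C → ℝ) : ℝ :=
  ∑ c, ω c * |D c - E c|

variable [Fintype C]

theorem coincidenceProfile_apply_eq_card {M : Type*} [DecidableEq A] [DecidableEq M]
    (lab : C → A) (E : C → M) (v : M) (a : A) :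
    coincidenceProfile lab E v a = #{c | lab c = a ∧ E c = v} := by
  rw [coincidenceProfile, ← Set.ncard_coe_finset, coe_filter_univ]

theorem coincidenceProfile_comp {M N : Type*} [DecidableEq A] [DecidableEq M] [DecidableEq N]
    (lab : C → A) (E : C → M) (σ : M → N) (u : N) :
    coincidenceProfile lab (σ ∘ E) u
      = ∑ v ∈ univ.image E with σ v = u, coincidenceProfile lab E v := by
  ext a
  simp only [Finset.sum_apply, coincidenceProfile_apply_eq_card]
  rw [card_eq_sum_card_fiberwise (f := E) (t := {v ∈ univ.image E | σ v = u})]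
  · refine sum_congr rfl fun v hv => congrArg card ?_
    have hσv : σ v = u := (mem_filter.1 hv).2
    ext c
    simp only [mem_filter, mem_univ, true_and]
    constructor
    · exact fun ⟨⟨hc, _⟩, hcv⟩ => ⟨hc, hcv⟩
    · exact fun ⟨hc, hcv⟩ => ⟨⟨hc, by rw [Function.comp_apply, hcv, hσv]⟩, hcv⟩
  · intro c hc
    simp only [mem_coe, mem_filter, mem_univ, true_and, mem_image] at hc ⊢
    exact ⟨⟨c, rfl⟩, hc.2⟩

theorem SatisfiesCoincidence.comp {M N : Type*} {Γ : AddSubmonoid (A → ℕ)} {lab : C → A}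
    {E : C → M} (hE : SatisfiesCoincidence Γ lab E) (σ : M → N) :
    SatisfiesCoincidence Γ lab (σ ∘ E) := by
  classical
  intro u
  rw [coincidenceProfile_comp]
  exact Γ.sum_mem fun v _ => hE v

end Repair

section Fibers

variable {ι κ : Type*} [Fintype ι] [DecidableEq κ]

theorem sum_eq_sum_fiberwise {M : Type*} [AddCommMonoid M] (E : ι → κ) (F : ι → κ → M) :
    ∑ i, F i (E i) = ∑ v ∈ univ.image E, ∑ i with E i = v, F i v := by
  rw [← sum_fiberwise_of_maps_to (fun i _ => mem_image_of_mem E (mem_univ i))]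
  refine sum_congr rfl fun v _ => sum_congr rfl fun i hi => ?_
  rw [(mem_filter.1 hi).2]

theorem sum_comp_le_of_forall_fiber_le {M : Type*} [AddCommMonoid M] [PartialOrder M]
    [IsOrderedAddMonoid M] (E : ι → κ) (σ : κ → κ) (F : ι → κ → M)
    (h : ∀ v ∈ Set.range E, ∑ i with E i = v, F i (σ v) ≤ ∑ i with E i = v, F i v) :
    ∑ i, F i (σ (E i)) ≤ ∑ i, F i (E i) :=
  calc ∑ i, F i (σ (E i))
      = ∑ v ∈ univ.image E, ∑ i with E i = v, F i (σ v) :=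
        sum_eq_sum_fiberwise E fun i v => F i (σ v)
    _ ≤ ∑ v ∈ univ.image E, ∑ i with E i = v, F i v :=
        sum_le_sum fun v hv => h v (by simpa using hv)
    _ = ∑ i, F i (E i) := (sum_eq_sum_fiberwise E F).symm

end Fibers

section Line

theorem sub_mul_abs_sub_eq_of_le_or_le {l v r z : ℝ} (hlv : l ≤ v) (hvr : v ≤ r)
    (hz : z ≤ l ∨ r ≤ z) :
    (r - l) * |z - v| = (r - v) * |z - l| + (v - l) * |z - r| := by
  rcases hz with hz | hz
  · rw [abs_of_nonpos (by linarith), abs_of_nonpos (by linarith), abs_of_nonpos (by linarith)]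
    ring
  · rw [abs_of_nonneg (by linarith), abs_of_nonneg (by linarith), abs_of_nonneg (by linarith)]
    ring

variable {ι : Type*}

theorem min_sum_mul_abs_sub_le (V : Finset ι) (d w : ι → ℝ) {l v r : ℝ} (hlv : l ≤ v)
    (hvr : v ≤ r) (hd : ∀ i ∈ V, d i ≤ l ∨ r ≤ d i) :
    min (∑ i ∈ V, w i * |d i - l|) (∑ i ∈ V, w i * |d i - r|) ≤ ∑ i ∈ V, w i * |d i - v| := by
  set f := fun x => ∑ i ∈ V, w i * |d i - x|
  have hinterp : (r - l) * f v = (r - v) * f l + (v - l) * f r := by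
    simp only [f, mul_sum, ← sum_add_distrib]
    refine sum_congr rfl fun i hi => ?_
    linear_combination w i * sub_mul_abs_sub_eq_of_le_or_le hlv hvr (hd i hi)
  rcases (hlv.trans hvr).eq_or_lt with rfl | hlr
  · exact le_antisymm hlv hvr ▸ min_le_left _ _
  · have hl := mul_le_mul_of_nonneg_left (min_le_left (f l) (f r)) (sub_nonneg.2 hvr)
    have hr := mul_le_mul_of_nonneg_left (min_le_right (f l) (f r)) (sub_nonneg.2 hlv)
    exact le_of_mul_le_mul_left (by linarith) (sub_pos.2 hlr)

noncomputable def candidates (V : Finset ι) (d ρ : ι → ℝ) : Finset ℝ :=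
  V.image d ∪ V.image (fun i => d i + ρ i) ∪ V.image (fun i => d i - ρ i)

theorem mem_candidates {V : Finset ι} {d ρ : ι → ℝ} {x : ℝ} :
    x ∈ candidates V d ρ ↔ ∃ i ∈ V, x = d i ∨ x = d i + ρ i ∨ x = d i - ρ i := by
  simp only [candidates, mem_union, mem_image]
  constructor
  · rintro ((⟨i, hi, rfl⟩ | ⟨i, hi, rfl⟩) | ⟨i, hi, rfl⟩) <;> exact ⟨i, hi, by simp⟩
  · rintro ⟨i, hi, rfl | rfl | rfl⟩
    exacts [Or.inl (Or.inl ⟨i, hi, rfl⟩), Or.inl (Or.inr ⟨i, hi, rfl⟩), Or.inr ⟨i, hi, rfl⟩]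

theorem candidates_mono {V W : Finset ι} (h : V ⊆ W) (d ρ : ι → ℝ) :
    candidates V d ρ ⊆ candidates W d ρ := by
  intro x hx
  obtain ⟨i, hi, hx⟩ := mem_candidates.1 hx
  exact mem_candidates.2 ⟨i, h hi, hx⟩

theorem exists_mem_candidates_sum_le (V : Finset ι) (hV : V.Nonempty) (d ρ w : ι → ℝ) {v : ℝ}
    (hv : ∀ i ∈ V, |d i - v| ≤ ρ i) :
    ∃ x ∈ candidates V d ρ, (∀ i ∈ V, |d i - x| ≤ ρ i) ∧
      ∑ i ∈ V, w i * |d i - x| ≤ ∑ i ∈ V, w i * |d i - v| := by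
  set T := candidates V d ρ
  obtain ⟨i₀, hi₀⟩ := hV
  have hlow : ∀ i ∈ V, d i - ρ i ≤ v := fun i hi => by linarith [(abs_le.1 (hv i hi)).2]
  have hup : ∀ i ∈ V, v ≤ d i + ρ i := fun i hi => by linarith [(abs_le.1 (hv i hi)).1]
  have hmem : ∀ i ∈ V, d i ∈ T ∧ d i + ρ i ∈ T ∧ d i - ρ i ∈ T := fun i hi =>
    ⟨mem_candidates.2 ⟨i, hi, by simp⟩, mem_candidates.2 ⟨i, hi, by simp⟩,
      mem_candidates.2 ⟨i, hi, by simp⟩⟩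
  obtain ⟨l, hl, hlmax⟩ := exists_max_image {t ∈ T | t ≤ v} id
    ⟨_, mem_filter.2 ⟨(hmem i₀ hi₀).2.2, hlow i₀ hi₀⟩⟩
  obtain ⟨r, hr, hrmin⟩ := exists_min_image {t ∈ T | v ≤ t} id
    ⟨_, mem_filter.2 ⟨(hmem i₀ hi₀).2.1, hup i₀ hi₀⟩⟩
  rw [mem_filter] at hl hr
  have hle_l : ∀ t ∈ T, t ≤ v → t ≤ l := fun t ht htv => hlmax t (mem_filter.2 ⟨ht, htv⟩)
  have hr_le : ∀ t ∈ T, v ≤ t → r ≤ t := fun t ht htv => hrmin t (mem_filter.2 ⟨ht, htv⟩)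
  have hfeas : ∀ x, l ≤ x → x ≤ r → ∀ i ∈ V, |d i - x| ≤ ρ i := fun x hlx hxr i hi => by
    have := hle_l _ (hmem i hi).2.2 (hlow i hi)
    have := hr_le _ (hmem i hi).2.1 (hup i hi)
    rw [abs_le]
    constructor <;> linarith
  have hkink : ∀ i ∈ V, d i ≤ l ∨ r ≤ d i := fun i hi =>
    (le_total (d i) v).imp (hle_l _ (hmem i hi).1) (hr_le _ (hmem i hi).1)
  have hmin := min_sum_mul_abs_sub_le V d w hl.2 hr.2 hkink
  rcases min_choice (∑ i ∈ V, w i * |d i - l|) (∑ i ∈ V, w i * |d i - r|) with h | h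
  · exact ⟨l, hl.1, hfeas l le_rfl (hl.2.trans hr.2), h ▸ hmin⟩
  · exact ⟨r, hr.1, hfeas r (hl.2.trans hr.2) le_rfl, h ▸ hmin⟩

end Line

section Optimal

variable {C A : Type*} [Fintype C]

theorem IsRepairWithin.exists_mem_candidates_cost_le {Γ : AddSubmonoid (A → ℕ)} {lab : C → A}
    {D ρ : C → ℝ} {E : C → ℝ} (hE : IsRepairWithin Γ lab D ρ E) (ω : C → ℝ) :
    ∃ E', IsRepairWithin Γ lab D ρ E' ∧ (∀ c, E' c ∈ candidates univ D ρ) ∧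
      repairCost ω D E' ≤ repairCost ω D E := by
  classical
  have hfiber : ∀ v ∈ Set.range E, ∃ x ∈ candidates univ D ρ,
      (∀ c ∈ ({c | E c = v} : Finset C), |D c - x| ≤ ρ c) ∧
      ∑ c with E c = v, ω c * |D c - x| ≤ ∑ c with E c = v, ω c * |D c - v| := by
    rintro v ⟨c, rfl⟩
    obtain ⟨x, hx, hfeas, hcost⟩ := exists_mem_candidates_sum_le {c' | E c' = E c}
      ⟨c, by simp⟩ D ρ ω fun c' hc' => (mem_filter.1 hc').2 ▸ hE.2 c'
    exact ⟨x, candidates_mono (subset_univ _) D ρ hx, hfeas, hcost⟩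
  choose! σ hσK hσρ hσcost using hfiber
  refine ⟨σ ∘ E, ⟨hE.1.comp σ, fun c => hσρ _ ⟨c, rfl⟩ c (by simp)⟩,
    fun c => hσK _ ⟨c, rfl⟩, ?_⟩
  exact sum_comp_le_of_forall_fiber_le E σ (fun c x => ω c * |D c - x|) hσcost

theorem exists_optimal_repairWithin_mem_candidates (Γ : AddSubmonoid (A → ℕ)) (lab : C → A)
    (D ρ ω : C → ℝ) (hex : ∃ E, IsRepairWithin Γ lab D ρ E) :
    ∃ E, IsRepairWithin Γ lab D ρ E ∧
      (∀ E', IsRepairWithin Γ lab D ρ E' → repairCost ω D E ≤ repairCost ω D E') ∧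
      ∀ c, E c ∈ candidates univ D ρ := by
  set R := {E | IsRepairWithin Γ lab D ρ E ∧ ∀ c, E c ∈ candidates univ D ρ}
  have hfin : R.Finite :=
    (Set.Finite.pi fun _ => (candidates univ D ρ).finite_toSet).subset
      fun E hE => Set.mem_univ_pi.2 hE.2
  obtain ⟨E₀, hE₀⟩ := hex
  obtain ⟨E₁, hE₁, hK₁, -⟩ := hE₀.exists_mem_candidates_cost_le ω
  obtain ⟨E, ⟨hE, hK⟩, hmin⟩ := R.exists_min_image (repairCost ω D) hfin ⟨E₁, hE₁, hK₁⟩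
  refine ⟨E, hE, fun E' hE' => ?_, hK⟩
  obtain ⟨E₂, hE₂, hK₂, hcost⟩ := hE'.exists_mem_candidates_cost_le ω
  exact (hmin E₂ ⟨hE₂, hK₂⟩).trans hcost

end Optimal

theorem stmt_11_general {C A : Type*} [Fintype C]
    (lab : C → A) (w : A → ℝ)
    (Γ : Set (A → ℕ))
    (hzero : (fun _ => 0) ∈ Γ)
    (hadd : ∀ p q : A → ℕ, p ∈ Γ → q ∈ Γ → (fun a => p a + q a) ∈ Γ)
    (τ : ℝ) (D : C → ℝ)
    (hex : ∃ E : C → ℝ,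
      (∀ v : ℝ, (fun a => {c : C | lab c = a ∧ E c = v}.ncard) ∈ Γ) ∧
      (∀ c, |D c - E c| ≤ w (lab c) * τ)) :
    ∃ E : C → ℝ,
      (∀ v : ℝ, (fun a => {c : C | lab c = a ∧ E c = v}.ncard) ∈ Γ) ∧
      (∀ c, |D c - E c| ≤ w (lab c) * τ) ∧
      (∀ E' : C → ℝ,
        (∀ v : ℝ, (fun a => {c : C | lab c = a ∧ E' c = v}.ncard) ∈ Γ) →
        (∀ c, |D c - E' c| ≤ w (lab c) * τ) →
        ∑ c : C, w (lab c) * |D c - E c| ≤ ∑ c : C, w (lab c) * |D c - E' c|) ∧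
      (∀ c : C, (∃ c' : C, E c = D c') ∨
        (∃ (c' : C) (a : A), E c = D c' + w a * τ) ∨
        (∃ (c' : C) (a : A), E c = D c' - w a * τ)) := by
  let ΓM : AddSubmonoid (A → ℕ) :=
    { carrier := Γ, add_mem' := fun hp hq => hadd _ _ hp hq, zero_mem' := hzero }
  obtain ⟨E, ⟨hΓ, hρ⟩, hopt, hK⟩ := exists_optimal_repairWithin_mem_candidates ΓM lab D
    (fun c => w (lab c) * τ) (fun c => w (lab c)) hex
  refine ⟨E, hΓ, hρ, fun E' hΓ' hρ' => hopt E' ⟨hΓ', hρ'⟩, fun c => ?_⟩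
  obtain ⟨c', -, h | h | h⟩ := mem_candidates.1 (hK c)
  exacts [Or.inl ⟨c', h⟩, Or.inr (Or.inl ⟨c', lab c', h⟩), Or.inr (Or.inr ⟨c', lab c', h⟩)]

/-- On the full line metric, for a uniform coincidence constraint containing the zero
profile and closed under addition: if a `(δ≤τ)`-repair of `D` exists, then there is an
optimal `(δ≤τ)`-repair whose values lie in
`Vals(D) ∪ {v + w(a)·τ} ∪ {v − w(a)·τ}` for `v ∈ Vals(D)`, `a ∈ A`. -/
theorem stmt_11 {C A : Type*} [Fintype C] [Fintype A]
    (lab : C → A) (w : A → ℝ) (hw : ∀ a, 0 ≤ w a)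
    (Γ : Set (A → ℕ))
    (hzero : (fun _ => 0) ∈ Γ)
    (hadd : ∀ p q : A → ℕ, p ∈ Γ → q ∈ Γ → (fun a => p a + q a) ∈ Γ)
    (τ : ℝ) (hτ : 0 ≤ τ) (D : C → ℝ)
    (hex : ∃ E : C → ℝ,
      (∀ v : ℝ, (fun a => {c : C | lab c = a ∧ E c = v}.ncard) ∈ Γ) ∧
      (∀ c, |D c - E c| ≤ w (lab c) * τ)) :
    ∃ E : C → ℝ,
      (∀ v : ℝ, (fun a => {c : C | lab c = a ∧ E c = v}.ncard) ∈ Γ) ∧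
      (∀ c, |D c - E c| ≤ w (lab c) * τ) ∧
      (∀ E' : C → ℝ,
        (∀ v : ℝ, (fun a => {c : C | lab c = a ∧ E' c = v}.ncard) ∈ Γ) →
        (∀ c, |D c - E' c| ≤ w (lab c) * τ) →
        ∑ c : C, w (lab c) * |D c - E c| ≤ ∑ c : C, w (lab c) * |D c - E' c|) ∧
      (∀ c : C, (∃ c' : C, E c = D c') ∨
        (∃ (c' : C) (a : A), E c = D c' + w a * τ) ∨
        (∃ (c' : C) (a : A), E c = D c' - w a * τ)) :=
  stmt_11_general lab w Γ hzero hadd τ D hex
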